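/- The eigenvalues of the quadratic form Q₊(a) = -2a₁² + (10/3)a₂² + 4a₃² + (10/3)a₄² - 2a₅² are (-2, -2, 10/3, 10/3, 4), while the eigenvalues of the quadratic form Q₋(a) = (4/3)a₂² + 4a₃² + (4/3)a₄² + (4/√3)a₁a₄ + (4/√3)a₂a₅ are (-2/3, -2/3, 2, 2, 4). In particular the two quadratic forms are not congruent (not related by an orthogonal change of coordinates). -/

import Mathlib

/-!
An orthogonal congruence preserves the characteristic polynomial, since
`charpoly (P * A * O) = charpoly (O * P * A)` and `O * P = 1`. The two forms have the same trace
`20/3`, but their characteristic polynomials already differ at `0` (`-1600/9` against `-64/9`).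
`Q₊` is diagonal, and `Q₋` splits into two copies of the block `[[0, 2/√3], [2/√3, 4/3]]`, with
eigenvalues `-2/3` and `2`, plus the eigenvalue `4`.
-/

open Matrix Polynomial

/-- The symmetric matrix of the Ricci quadratic form `Q₊` of `M₊⁵`. -/
noncomputable def Mplus : Matrix (Fin 5) (Fin 5) ℝ :=
  Matrix.diagonal ![-2, 10 / 3, 4, 10 / 3, -2]

/-- The symmetric matrix of the Ricci quadratic form `Q₋` of `M₋⁵`. -/
noncomputable def Mminus : Matrix (Fin 5) (Fin 5) ℝ :=
  !![0, 0, 0, 2 / Real.sqrt 3, 0;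
     0, 4 / 3, 0, 0, 2 / Real.sqrt 3;
     0, 0, 4, 0, 0;
     2 / Real.sqrt 3, 0, 0, 4 / 3, 0;
     0, 2 / Real.sqrt 3, 0, 0, 0]

theorem Matrix.charpoly_mul_mul_of_mul_eq_one {n R : Type*} [Fintype n] [DecidableEq n]
    [CommRing R] {O P : Matrix n n R} (h : O * P = 1) (A : Matrix n n R) :
    (P * A * O).charpoly = A.charpoly := by
  rw [charpoly_mul_comm, ← Matrix.mul_assoc, h, Matrix.one_mul]

/-- The coordinate pairs `{0, 3}` and `{1, 4}` each carry the block `[[0, s], [s, a]]`, whose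
characteristic polynomial is `X² - aX - s²`. -/
theorem Matrix.charpoly_two_coupled_pairs {R : Type*} [CommRing R] (a b s : R) :
    (!![0, 0, 0, s, 0; 0, a, 0, 0, s; 0, 0, b, 0, 0; s, 0, 0, a, 0; 0, s, 0, 0, 0]).charpoly =
      (X ^ 2 - C a * X - C s ^ 2) ^ 2 * (X - C b) := by
  simp [Matrix.charpoly, det_succ_row_zero, Fin.sum_univ_succ, Fin.succAbove]
  ring

theorem charpoly_Mplus : Mplus.charpoly = (X + C 2) ^ 2 * (X - C (10 / 3)) ^ 2 * (X - C 4) := by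
  rw [Mplus, charpoly_diagonal, Fin.prod_univ_five]
  simp only [cons_val, map_neg]
  ring

theorem charpoly_Mminus :
    Mminus.charpoly = (X + C (2 / 3)) ^ 2 * (X - C 2) ^ 2 * (X - C 4) := by
  have hs : (2 / Real.sqrt 3) ^ 2 = 4 / 3 := by
    rw [div_pow, Real.sq_sqrt] <;> norm_num
  have hquad : X ^ 2 - C (4 / 3 : ℝ) * X - C (4 / 3) = (X + C (2 / 3)) * (X - C 2) := by
    apply Polynomial.funext
    intro x
    simp
    ring
  rw [Mminus, charpoly_two_coupled_pairs, ← map_pow, hs, hquad]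
  ring

theorem stmt13 :
    Mplus.charpoly = (X + C 2) ^ 2 * (X - C (10 / 3)) ^ 2 * (X - C 4) ∧
      Mminus.charpoly = (X + C (2 / 3)) ^ 2 * (X - C 2) ^ 2 * (X - C 4) ∧
      ∀ O : Matrix (Fin 5) (Fin 5) ℝ, O * Oᵀ = 1 → Oᵀ * Mplus * O ≠ Mminus := by
  refine ⟨charpoly_Mplus, charpoly_Mminus, fun O hO hconj => ?_⟩
  have hcharpoly := congrArg (eval 0) (charpoly_mul_mul_of_mul_eq_one hO Mplus)
  rw [hconj, charpoly_Mplus, charpoly_Mminus] at hcharpoly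
  norm_num at hcharpoly
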